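/- Let G be a finite connected graph, {F_1, …, F_k} a c-partition of E(G), and e = uv ∈ F_i. Set U = ℓ_i(u), V = ℓ_i(v), so that E = UV is an edge of G_i = G/F_i. Then for every vertex z ∈ V(G): z ∈ N_u(e|G) if and only if ℓ_i(z) ∈ N_U(E|G_i). -/

import Mathlib

open SimpleGraph

noncomputable section

/-- The Djoković–Winkler relation `Θ` on the edges of a graph `G`:
edges `e = xy` and `f = ab` are related iff
`d(x,a) + d(y,b) ≠ d(x,b) + d(y,a)`. -/
def theta {V : Type*} (G : SimpleGraph V) (e f : Sym2 V) : Prop :=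
  e ∈ G.edgeSet ∧ f ∈ G.edgeSet ∧
    ∃ x y a b : V, e = s(x, y) ∧ f = s(a, b) ∧
      G.dist x a + G.dist y b ≠ G.dist x b + G.dist y a

/-- The quotient graph `G/F`: its vertices are the connected components of
`G − F`, two components being adjacent iff some vertex of one is adjacent in
`G` to some vertex of the other. -/
def quotientGraph {V : Type*} (G : SimpleGraph V) (F : Set (Sym2 V)) :
    SimpleGraph (G.deleteEdges F).ConnectedComponent where
  Adj X Y := X ≠ Y ∧ ∃ x y : V,
    (G.deleteEdges F).connectedComponentMk x = X ∧
    (G.deleteEdges F).connectedComponentMk y = Y ∧ G.Adj x y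
  symm := by
    constructor
    rintro X Y ⟨hne, x, y, hx, hy, hadj⟩
    exact ⟨hne.symm, y, x, hy, hx, hadj.symm⟩
  loopless := by
    constructor
    rintro X ⟨hne, -⟩
    exact hne rfl

/-- `F₁, …, F_k` is a partition of the edge set of `G`. -/
def IsEdgePartition {V : Type*} (G : SimpleGraph V) {k : ℕ}
    (F : Fin k → Set (Sym2 V)) : Prop :=
  (∀ i, F i ⊆ G.edgeSet) ∧ (∀ e ∈ G.edgeSet, ∃ i, e ∈ F i) ∧
    (∀ i j, i ≠ j → Disjoint (F i) (F j))

/-- `F₁, …, F_k` is a c-partition of the edge set of `G`: a partition such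
that every `Θ*`-class (class of the transitive closure of `Θ`) is contained
in some part. -/
def IsCPartition {V : Type*} (G : SimpleGraph V) {k : ℕ}
    (F : Fin k → Set (Sym2 V)) : Prop :=
  IsEdgePartition G F ∧
    ∀ e f : Sym2 V, Relation.TransGen (theta G) e f → ∀ i, e ∈ F i → f ∈ F i

/-- For an edge `e = uv`, `nW G w u v` is `n_u(e|(G,w))`, the sum of the
weights of the vertices strictly closer to `u` than to `v`. -/
def nW {V : Type*} (G : SimpleGraph V) (w : V → NNReal) (u v : V) : NNReal :=
  ∑ᶠ x ∈ {x : V | G.dist x u < G.dist x v}, w x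

/-- The Mostar index of a vertex-edge-weighted graph `(G, w, w')`. -/
def MostarW {V : Type*} (G : SimpleGraph V) (w : V → NNReal)
    (w' : Sym2 V → NNReal) : ℝ :=
  ∑ᶠ e ∈ G.edgeSet, (w' e : ℝ) *
    Sym2.lift ⟨fun u v => |((nW G w u v : ℝ)) - ((nW G w v u : ℝ))|,
      fun _ _ => abs_sub_comm _ _⟩ e

/-- The (unweighted) Mostar index of a graph `G`. -/
def Mostar {V : Type*} (G : SimpleGraph V) : ℝ :=
  ∑ᶠ e ∈ G.edgeSet,
    Sym2.lift ⟨fun u v =>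
      |((Nat.card {x : V | G.dist x u < G.dist x v} : ℝ)) -
        ((Nat.card {x : V | G.dist x v < G.dist x u} : ℝ))|,
      fun _ _ => abs_sub_comm _ _⟩ e

/-!
Fix a geodesic `P` from `x` to `y` and let `Φ(w) = ∑ (d(w,a) - d(w,b))` over the darts `(a,b)` of
`P` whose edge lies in `F`. Since no edge of `F` is in relation `Θ` with an edge outside `F`,
`Φ` is constant along edges outside `F` and, because the full sum over `P` telescopes to
`d(w,x) - d(w,y)`, changes by at most `2` along an edge of `F`. Along `P` itself every `F`-edge
raises `Φ` by exactly `2`, so no walk from `x` to `y` crosses `F` fewer times than `P`. Hence the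
distance in `G/F` is the number of `F`-edges on any geodesic, and comparing geodesics to the two
ends of an edge `uv ∈ F` gives the theorem.
-/

lemma SimpleGraph.Adj.dist_le_dist_add_one {V : Type*} {G : SimpleGraph V} {c d : V}
    (h : G.Adj c d) (w : V) : G.dist d w ≤ G.dist c w + 1 := by
  have := h.symm.reachable.dist_triangle_left w
  have := G.dist_eq_one_iff_adj.mpr h.symm
  omega

lemma theta_symm {V : Type*} {G : SimpleGraph V} {e f : Sym2 V} (h : theta G e f) :
    theta G f e := by
  obtain ⟨he, hf, x, y, a, b, rfl, rfl, hne⟩ := h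
  refine ⟨hf, he, a, b, x, y, rfl, rfl, ?_⟩
  simp only [G.dist_comm (u := a), G.dist_comm (u := b)]
  omega

lemma dist_sub_dist_eq_of_not_theta {V : Type*} {G : SimpleGraph V} {x y c d : V}
    (hxy : G.Adj x y) (hcd : G.Adj c d) (h : ¬ theta G s(x, y) s(c, d)) :
    (G.dist c x : ℤ) - G.dist c y = G.dist d x - G.dist d y := by
  by_contra hne
  refine h ⟨hxy, hcd, x, y, c, d, rfl, rfl, ?_⟩
  simp only [G.dist_comm (u := x), G.dist_comm (u := y)]
  omega

/-- A set of edges that is a union of `Θ*`-classes. -/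
def IsThetaClosed {V : Type*} (G : SimpleGraph V) (F : Set (Sym2 V)) : Prop :=
  ∀ e ∈ F, ∀ f, theta G e f → f ∈ F

lemma IsCPartition.isThetaClosed {V : Type*} {G : SimpleGraph V} {k : ℕ}
    {F : Fin k → Set (Sym2 V)} (hF : IsCPartition G F) (i : Fin k) : IsThetaClosed G (F i) :=
  fun e he f hef => hF.2 e f (.single hef) i he

lemma IsThetaClosed.mem_iff_of_theta {V : Type*} {G : SimpleGraph V} {F : Set (Sym2 V)}
    (hF : IsThetaClosed G F) {e f : Sym2 V} (h : theta G e f) : e ∈ F ↔ f ∈ F :=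
  ⟨fun he => hF e he f h, fun hf => hF f hf e (theta_symm h)⟩

namespace SimpleGraph.Walk

variable {V : Type*} {G : SimpleGraph V} (F : Set (Sym2 V)) [DecidablePred (· ∈ F)]

def countEdgesIn {a b : V} (W : G.Walk a b) : ℕ :=
  W.edges.countP (· ∈ F)

/-- The potential `Φ` of the proof sketch above. -/
def potential {x y : V} (P : G.Walk x y) (w : V) : ℤ :=
  (P.darts.map fun d => if d.edge ∈ F then (G.dist w d.fst : ℤ) - G.dist w d.snd else 0).sum

variable {F}

@[simp]
lemma countEdgesIn_nil (a : V) : (nil : G.Walk a a).countEdgesIn F = 0 := rfl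

@[simp]
lemma countEdgesIn_cons {a b c : V} (h : G.Adj a b) (W : G.Walk b c) :
    (cons h W).countEdgesIn F = (if s(a, b) ∈ F then 1 else 0) + W.countEdgesIn F := by
  simp [countEdgesIn, List.countP_cons, add_comm]

lemma countEdgesIn_append {a b c : V} (W : G.Walk a b) (W' : G.Walk b c) :
    (W.append W').countEdgesIn F = W.countEdgesIn F + W'.countEdgesIn F := by
  simp [countEdgesIn, edges_append, List.countP_append]

lemma countEdgesIn_eq_zero {a b : V} {W : G.Walk a b} (h : ∀ e ∈ W.edges, e ∉ F) :
    W.countEdgesIn F = 0 :=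
  List.countP_eq_zero.mpr fun e he => by simpa using h e he

@[simp]
lemma potential_nil (x w : V) : (nil : G.Walk x x).potential F w = 0 := rfl

@[simp]
lemma potential_cons {x x₁ y : V} (h : G.Adj x x₁) (P : G.Walk x₁ y) (w : V) :
    (cons h P).potential F w =
      (if s(x, x₁) ∈ F then (G.dist w x : ℤ) - G.dist w x₁ else 0) + P.potential F w :=
  rfl

variable (hF : IsThetaClosed G F)
include hF

lemma potential_eq_of_adj_of_not_mem {x y c d : V} (P : G.Walk x y) (hcd : G.Adj c d)
    (hcdF : s(c, d) ∉ F) : P.potential F c = P.potential F d := by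
  induction P with
  | nil => rfl
  | @cons x x₁ y h P ih =>
    by_cases hxF : s(x, x₁) ∈ F
    · have := dist_sub_dist_eq_of_not_theta h hcd fun hθ => hcdF ((hF.mem_iff_of_theta hθ).1 hxF)
      simp only [potential_cons, if_pos hxF]
      omega
    · simp only [potential_cons, if_neg hxF]
      omega

lemma potential_sub_potential_of_adj_of_mem {x y c d : V} (P : G.Walk x y) (hcd : G.Adj c d)
    (hcdF : s(c, d) ∈ F) :
    P.potential F d - P.potential F c =
      ((G.dist d x : ℤ) - G.dist d y) - ((G.dist c x : ℤ) - G.dist c y) := by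
  induction P with
  | nil => simp
  | @cons x x₁ y h P ih =>
    by_cases hxF : s(x, x₁) ∈ F
    · simp only [potential_cons, if_pos hxF]
      omega
    · have := dist_sub_dist_eq_of_not_theta h hcd fun hθ => hxF ((hF.mem_iff_of_theta hθ).2 hcdF)
      simp only [potential_cons, if_neg hxF]
      omega

lemma potential_sub_potential_le {x y : V} (P : G.Walk x y) {a b : V} (W : G.Walk a b) :
    P.potential F b - P.potential F a ≤ 2 * W.countEdgesIn F := by
  induction W with
  | nil => simp
  | @cons a a₁ b h W ih =>
    by_cases haF : s(a, a₁) ∈ F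
    · have := P.potential_sub_potential_of_adj_of_mem hF h haF
      have := h.dist_le_dist_add_one x
      have := h.dist_le_dist_add_one y
      have := h.symm.dist_le_dist_add_one x
      have := h.symm.dist_le_dist_add_one y
      simp only [countEdgesIn_cons, if_pos haF]
      omega
    · have := P.potential_eq_of_adj_of_not_mem hF h haF
      simp only [countEdgesIn_cons, if_neg haF]
      omega

lemma potential_sub_potential_of_length_eq_dist {x y : V} (P : G.Walk x y)
    (hP : P.length = G.dist x y) :
    P.potential F y - P.potential F x = 2 * P.countEdgesIn F := by
  induction P with
  | nil => simp
  | @cons x x₁ y h P ih =>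
    rw [length_cons] at hP
    have hx₁ : G.dist x x₁ = 1 := G.dist_eq_one_iff_adj.mpr h
    have hxy : G.dist x y ≤ G.dist x x₁ + G.dist x₁ y := h.reachable.dist_triangle_left y
    have hP' : P.length = G.dist x₁ y := le_antisymm (by omega) (G.dist_le P)
    have := ih hP'
    have := G.dist_comm (u := y) (v := x)
    have := G.dist_comm (u := y) (v := x₁)
    by_cases hxF : s(x, x₁) ∈ F
    · have hjump := P.potential_sub_potential_of_adj_of_mem hF h.symm (Sym2.eq_swap ▸ hxF)
      simp only [dist_self] at hjump
      simp only [potential_cons, countEdgesIn_cons, if_pos hxF, dist_self]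
      omega
    · have := P.potential_eq_of_adj_of_not_mem hF h hxF
      simp only [potential_cons, countEdgesIn_cons, if_neg hxF]
      omega

lemma countEdgesIn_le_of_length_eq_dist {x y : V} {P : G.Walk x y}
    (hP : P.length = G.dist x y) (W : G.Walk x y) : P.countEdgesIn F ≤ W.countEdgesIn F := by
  have := P.potential_sub_potential_of_length_eq_dist hF hP
  have := P.potential_sub_potential_le hF W
  omega

end SimpleGraph.Walk

section Quotient

open Walk

variable {V : Type*} {G : SimpleGraph V} {F : Set (Sym2 V)} [DecidablePred (· ∈ F)]

lemma exists_walk_quotientGraph_length_le {a b : V} (W : G.Walk a b) :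
    ∃ q : (quotientGraph G F).Walk ((G.deleteEdges F).connectedComponentMk a)
      ((G.deleteEdges F).connectedComponentMk b), q.length ≤ W.countEdgesIn F := by
  induction W with
  | nil => exact ⟨nil, le_rfl⟩
  | @cons a a₁ b h W ih =>
    obtain ⟨q, hq⟩ := ih
    by_cases heq : (G.deleteEdges F).connectedComponentMk a =
      (G.deleteEdges F).connectedComponentMk a₁
    · exact ⟨q.copy heq.symm rfl, by simp only [length_copy, countEdgesIn_cons]; omega⟩
    · have haF : s(a, a₁) ∈ F := by
        by_contra haF
        exact heq (ConnectedComponent.sound (deleteEdges_adj.mpr ⟨h, haF⟩).reachable)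
      have hadj : (quotientGraph G F).Adj _ _ := ⟨heq, a, a₁, rfl, rfl, h⟩
      refine ⟨cons hadj q, ?_⟩
      simp only [Walk.length_cons, countEdgesIn_cons, if_pos haF]
      omega

lemma exists_walk_countEdgesIn_eq_zero {a b : V}
    (hab : (G.deleteEdges F).connectedComponentMk a = (G.deleteEdges F).connectedComponentMk b) :
    ∃ W : G.Walk a b, W.countEdgesIn F = 0 := by
  obtain ⟨p⟩ := ConnectedComponent.exact hab
  have hp : ∀ e ∈ p.edges, e ∈ G.edgeSet ∧ e ∉ F := fun e he => by
    simpa only [edgeSet_deleteEdges, Set.mem_sdiff] using p.edges_subset_edgeSet he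
  refine ⟨p.transfer G fun e he => (hp e he).1, countEdgesIn_eq_zero fun e he => ?_⟩
  rw [edges_transfer] at he
  exact (hp e he).2

lemma exists_walk_countEdgesIn_le {X Y : (G.deleteEdges F).ConnectedComponent}
    (q : (quotientGraph G F).Walk X Y) {a b : V} (ha : (G.deleteEdges F).connectedComponentMk a = X)
    (hb : (G.deleteEdges F).connectedComponentMk b = Y) :
    ∃ W : G.Walk a b, W.countEdgesIn F ≤ q.length := by
  induction q generalizing a with
  | nil =>
    obtain ⟨W, hW⟩ := exists_walk_countEdgesIn_eq_zero (ha.trans hb.symm)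
    exact ⟨W, hW.le⟩
  | cons hadj q ih =>
    obtain ⟨-, p, p', hp, hp', hpp'⟩ := id hadj
    obtain ⟨W₁, hW₁⟩ := exists_walk_countEdgesIn_eq_zero (ha.trans hp.symm)
    obtain ⟨W₂, hW₂⟩ := ih hp' hb
    refine ⟨W₁.append (cons hpp' W₂), ?_⟩
    rw [countEdgesIn_append, hW₁, countEdgesIn_cons, length_cons]
    split <;> omega

variable (hF : IsThetaClosed G F)
include hF

lemma countEdgesIn_eq_dist_quotientGraph {x y : V} {P : G.Walk x y}
    (hP : P.length = G.dist x y) :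
    P.countEdgesIn F = (quotientGraph G F).dist ((G.deleteEdges F).connectedComponentMk x)
      ((G.deleteEdges F).connectedComponentMk y) := by
  obtain ⟨q, hq⟩ := exists_walk_quotientGraph_length_le (F := F) P
  obtain ⟨q₀, hq₀⟩ := q.reachable.exists_walk_length_eq_dist
  obtain ⟨W, hW⟩ := exists_walk_countEdgesIn_le q₀ rfl rfl
  have := countEdgesIn_le_of_length_eq_dist hF hP W
  have := dist_le q
  omega

lemma dist_quotientGraph_lt_of_dist_lt {u v z : V} (huv : G.Adj u v) (huvF : s(u, v) ∈ F)
    (hzu : G.Reachable z u) (h : G.dist z u < G.dist z v) :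
    (quotientGraph G F).dist ((G.deleteEdges F).connectedComponentMk z)
        ((G.deleteEdges F).connectedComponentMk u) <
      (quotientGraph G F).dist ((G.deleteEdges F).connectedComponentMk z)
        ((G.deleteEdges F).connectedComponentMk v) := by
  obtain ⟨P, hP⟩ := hzu.exists_walk_length_eq_dist
  have := huv.reachable.dist_triangle_right z
  have := G.dist_eq_one_iff_adj.mpr huv
  have hPv : (P.concat huv).length = G.dist z v := by rw [length_concat]; omega
  rw [← countEdgesIn_eq_dist_quotientGraph hF hP, ← countEdgesIn_eq_dist_quotientGraph hF hPv,
    concat_eq_append, countEdgesIn_append, countEdgesIn_cons, if_pos huvF]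
  omega

lemma dist_quotientGraph_le_of_dist_le {u v z : V} (huv : G.Adj u v) (huvF : s(u, v) ∈ F)
    (hzu : G.Reachable z u) (h : G.dist z u ≤ G.dist z v) :
    (quotientGraph G F).dist ((G.deleteEdges F).connectedComponentMk z)
        ((G.deleteEdges F).connectedComponentMk u) ≤
      (quotientGraph G F).dist ((G.deleteEdges F).connectedComponentMk z)
        ((G.deleteEdges F).connectedComponentMk v) := by
  obtain ⟨P, hP⟩ := hzu.exists_walk_length_eq_dist
  obtain ⟨q, -⟩ := exists_walk_quotientGraph_length_le (F := F) (P.concat huv)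
  obtain ⟨q₀, hq₀⟩ := q.reachable.exists_walk_length_eq_dist
  obtain ⟨W, hW⟩ := exists_walk_countEdgesIn_le q₀ rfl rfl
  rw [← countEdgesIn_eq_dist_quotientGraph hF hP]
  -- `Φ` of `P` drops by `d(z,u) - d(z,v) + 1 ≤ 1` from `u` to `v`, and parity does the rest
  have hjump := P.potential_sub_potential_of_adj_of_mem hF huv.symm (Sym2.eq_swap ▸ huvF)
  have := P.potential_sub_potential_of_length_eq_dist hF hP
  have := P.potential_sub_potential_le hF W
  have := G.dist_eq_one_iff_adj.mpr huv.symm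
  have := G.dist_comm (u := u) (v := z)
  have := G.dist_comm (u := v) (v := z)
  simp only [dist_self] at hjump
  omega

end Quotient

theorem mem_N_iff_component_mem_N_general {V : Type*} (G : SimpleGraph V)
    (hG : G.Connected) {k : ℕ} (F : Fin k → Set (Sym2 V))
    (hF : IsCPartition G F) (i : Fin k) (u v : V) (he : s(u, v) ∈ F i)
    (z : V) :
    G.dist z u < G.dist z v ↔
      (quotientGraph G (F i)).dist
          ((G.deleteEdges (F i)).connectedComponentMk z)
          ((G.deleteEdges (F i)).connectedComponentMk u) <
        (quotientGraph G (F i)).dist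
          ((G.deleteEdges (F i)).connectedComponentMk z)
          ((G.deleteEdges (F i)).connectedComponentMk v) := by
  classical
  have huv : G.Adj u v := hF.1.1 i he
  have hθ := hF.isThetaClosed i
  refine ⟨dist_quotientGraph_lt_of_dist_lt hθ huv he (hG z u), fun h => ?_⟩
  by_contra! hvu
  have := dist_quotientGraph_le_of_dist_le hθ huv.symm (Sym2.eq_swap ▸ he) (hG z v) hvu
  omega

/-- if `{F₁, …, F_k}` is a c-partition of the edge set of a finite
connected graph `G` and `e = uv ∈ F_i`, then a vertex `z` belongs to
`N_u(e|G)` iff its component `ℓ_i(z)` belongs to `N_U(E|G_i)`, where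
`U = ℓ_i(u)`, `V = ℓ_i(v)` and `E = UV`. -/
theorem mem_N_iff_component_mem_N {V : Type*} [Fintype V] (G : SimpleGraph V)
    (hG : G.Connected) {k : ℕ} (F : Fin k → Set (Sym2 V))
    (hF : IsCPartition G F) (i : Fin k) (u v : V) (he : s(u, v) ∈ F i)
    (z : V) :
    G.dist z u < G.dist z v ↔
      (quotientGraph G (F i)).dist
          ((G.deleteEdges (F i)).connectedComponentMk z)
          ((G.deleteEdges (F i)).connectedComponentMk u) <
        (quotientGraph G (F i)).dist
          ((G.deleteEdges (F i)).connectedComponentMk z)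
          ((G.deleteEdges (F i)).connectedComponentMk v) :=
  mem_N_iff_component_mem_N_general G hG F hF i u v he z
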